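/- The dual function d(λ) = β ∑_z ρ(z) log Q(z,λ) + λ C + (β/2) λ² is twice differentiable on ℝ, and for every λ ∈ ℝ its second derivative equals d″(λ) = β + (1/β) ∑_z ρ(z) w2(z)² · Var_{π_λ(·|z)}(c(z,·)), where Var_p(g) = ∑_{a∈{0,1}} p(a) g(a)² − ( ∑_{a∈{0,1}} p(a) g(a) )². -/

import Mathlib

/-!
Since `q_λ(z,a)/β = x_z(a) + λ g_z(a)` with `g_z = -(w2(z)/β) c(z,·)`, each `log Q(z,·)` is the
log-partition function of an exponential family in `λ`: its first derivative is the mean of `g_z`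
under the Gibbs policy `π_λ(·|z)`, and differentiating that mean once more gives the variance of
`g_z`, which is `(w2(z)/β)² Var(c(z,·))`. The quadratic term `βλ²/2` contributes the constant `β`.
-/

open Finset

/-- `q_λ(z,a) = w1(z) r(z,a) − λ w2(z) c(z,a)`. -/
noncomputable def qfun {Z : Type*} (r c : Z → Bool → ℝ) (w1 w2 : Z → ℝ)
    (lam : ℝ) (z : Z) (a : Bool) : ℝ :=
  w1 z * r z a - lam * (w2 z * c z a)

/-- Partition function `Q(z,λ) = ∑_a exp(q_λ(z,a)/β)`. -/
noncomputable def Qpart {Z : Type*} (r c : Z → Bool → ℝ) (w1 w2 : Z → ℝ)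
    (β lam : ℝ) (z : Z) : ℝ :=
  ∑ a, Real.exp (qfun r c w1 w2 lam z a / β)

/-- Gibbs policy `π_λ(a|z) = exp(q_λ(z,a)/β) / Q(z,λ)`. -/
noncomputable def gibbs {Z : Type*} (r c : Z → Bool → ℝ) (w1 w2 : Z → ℝ)
    (β lam : ℝ) (z : Z) (a : Bool) : ℝ :=
  Real.exp (qfun r c w1 w2 lam z a / β) / Qpart r c w1 w2 β lam z

/-- The dual function `d(λ) = β ∑_z ρ(z) log Q(z,λ) + λ C + (β/2) λ²`. -/
noncomputable def dualFun {Z : Type*} [Fintype Z] (ρ : Z → ℝ)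
    (r c : Z → Bool → ℝ) (w1 w2 : Z → ℝ) (β C lam : ℝ) : ℝ :=
  β * ∑ z, ρ z * Real.log (Qpart r c w1 w2 β lam z) + lam * C + β * lam ^ 2 / 2

/-- Variance of `g` under a pmf `p` on `{0,1}`:
`Var_p(g) = ∑_a p(a) g(a)² − (∑_a p(a) g(a))²`. -/
noncomputable def varBool (p g : Bool → ℝ) : ℝ :=
  (∑ a, p a * g a ^ 2) - (∑ a, p a * g a) ^ 2

open Real

section LogSumExp

variable {α : Type*} [Fintype α] (x g : α → ℝ)

noncomputable def expSum (l : ℝ) : ℝ :=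
  ∑ a, exp (x a + l * g a)

noncomputable def tilted (l : ℝ) (a : α) : ℝ :=
  exp (x a + l * g a) / expSum x g l

theorem expSum_pos [Nonempty α] (l : ℝ) : 0 < expSum x g l :=
  Finset.sum_pos (fun _ _ => exp_pos _) univ_nonempty

theorem hasDerivAt_exp_affine (x₀ g₀ l : ℝ) :
    HasDerivAt (fun t => exp (x₀ + t * g₀)) (g₀ * exp (x₀ + l * g₀)) l := by
  have h : HasDerivAt (fun t => x₀ + t * g₀) g₀ l := by
    simpa using ((hasDerivAt_id l).mul_const g₀).const_add x₀
  simpa [mul_comm] using h.exp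

theorem hasDerivAt_expSum (l : ℝ) :
    HasDerivAt (expSum x g) (∑ a, g a * exp (x a + l * g a)) l :=
  HasDerivAt.fun_sum fun a _ => hasDerivAt_exp_affine (x a) (g a) l

theorem sum_tilted_mul (f : α → ℝ) (l : ℝ) :
    ∑ a, tilted x g l a * f a = (∑ a, f a * exp (x a + l * g a)) / expSum x g l := by
  simp only [tilted, Finset.sum_div]
  exact Finset.sum_congr rfl fun a _ => by ring

theorem hasDerivAt_log_expSum [Nonempty α] (l : ℝ) :
    HasDerivAt (fun t => log (expSum x g t)) (∑ a, tilted x g l a * g a) l := by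
  rw [sum_tilted_mul]
  exact (hasDerivAt_expSum x g l).log (expSum_pos x g l).ne'

theorem hasDerivAt_tilted_mean [Nonempty α] (l : ℝ) :
    HasDerivAt (fun t => ∑ a, tilted x g t a * g a)
      ((∑ a, tilted x g l a * g a ^ 2) - (∑ a, tilted x g l a * g a) ^ 2) l := by
  have hfirst : HasDerivAt (fun t => ∑ a, g a * exp (x a + t * g a))
      (∑ a, g a ^ 2 * exp (x a + l * g a)) l :=
    HasDerivAt.fun_sum fun a _ => by
      simpa [← mul_assoc, ← sq] using (hasDerivAt_exp_affine (x a) (g a) l).const_mul (g a)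
  have hS := (expSum_pos x g l).ne'
  simp only [sum_tilted_mul]
  refine (hfirst.div (hasDerivAt_expSum x g l) hS).congr_deriv ?_
  generalize ∑ a, g a ^ 2 * exp (x a + l * g a) = m₂
  generalize ∑ a, g a * exp (x a + l * g a) = m₁
  field_simp

end LogSumExp

theorem varBool_const_mul (p g : Bool → ℝ) (k : ℝ) :
    varBool p (fun a => k * g a) = k ^ 2 * varBool p g := by
  simp only [varBool, Fintype.sum_bool]
  ring

section Dual

variable {Z : Type*} (r c : Z → Bool → ℝ) (w1 w2 : Z → ℝ) (β : ℝ)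

theorem Qpart_eq_expSum (l : ℝ) (z : Z) :
    Qpart r c w1 w2 β l z
      = expSum (fun a => w1 z * r z a / β) (fun a => -(w2 z / β) * c z a) l := by
  simp only [Qpart, expSum, qfun]
  exact Finset.sum_congr rfl fun a _ => congrArg exp (by ring)

theorem gibbs_eq_tilted (l : ℝ) (z : Z) :
    gibbs r c w1 w2 β l z
      = tilted (fun a => w1 z * r z a / β) (fun a => -(w2 z / β) * c z a) l := by
  funext a
  rw [gibbs, tilted, Qpart_eq_expSum, qfun]
  congr 2
  ring

variable [Fintype Z] (ρ : Z → ℝ) (C : ℝ)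

noncomputable def dualDeriv (l : ℝ) : ℝ :=
  β * ∑ z, ρ z * ∑ a, gibbs r c w1 w2 β l z a * (-(w2 z / β) * c z a) + C + β * l

theorem hasDerivAt_dualFun (l : ℝ) :
    HasDerivAt (dualFun ρ r c w1 w2 β C) (dualDeriv r c w1 w2 β ρ C l) l := by
  have hlog : HasDerivAt (fun t => ∑ z, ρ z * log (Qpart r c w1 w2 β t z))
      (∑ z, ρ z * ∑ a, gibbs r c w1 w2 β l z a * (-(w2 z / β) * c z a)) l := by
    refine HasDerivAt.fun_sum fun z _ => HasDerivAt.const_mul (ρ z) ?_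
    simp only [Qpart_eq_expSum, gibbs_eq_tilted]
    exact hasDerivAt_log_expSum _ _ l
  have hquad : HasDerivAt (fun t : ℝ => β * t ^ 2 / 2) (β * l) l := by
    refine (((hasDerivAt_pow 2 l).const_mul β).div_const 2).congr_deriv ?_
    norm_num
    ring
  exact ((hlog.const_mul β).add (hasDerivAt_mul_const C)).add hquad

theorem hasDerivAt_dualDeriv (l : ℝ) :
    HasDerivAt (dualDeriv r c w1 w2 β ρ C)
      (β * ∑ z, ρ z * varBool (gibbs r c w1 w2 β l z) (fun a => -(w2 z / β) * c z a) + β) l := by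
  have hmean : HasDerivAt
      (fun t => ∑ z, ρ z * ∑ a, gibbs r c w1 w2 β t z a * (-(w2 z / β) * c z a))
      (∑ z, ρ z * varBool (gibbs r c w1 w2 β l z) (fun a => -(w2 z / β) * c z a)) l := by
    refine HasDerivAt.fun_sum fun z _ => HasDerivAt.const_mul (ρ z) ?_
    simp only [gibbs_eq_tilted]
    exact hasDerivAt_tilted_mean _ _ l
  exact ((hmean.const_mul β).add_const C).add (hasDerivAt_const_mul β)

end Dual

theorem dual_second_deriv_general {Z : Type*} [Fintype Z]
    (ρ : Z → ℝ)
    (r c : Z → Bool → ℝ) (w1 w2 : Z → ℝ)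
    (β : ℝ) (C : ℝ) :
    Differentiable ℝ (fun l => dualFun ρ r c w1 w2 β C l) ∧
    ∀ lam : ℝ,
      HasDerivAt (deriv (fun l => dualFun ρ r c w1 w2 β C l))
        (β + 1 / β * ∑ z, ρ z * w2 z ^ 2 *
          varBool (gibbs r c w1 w2 β lam z) (c z))
        lam := by
  have hd := hasDerivAt_dualFun r c w1 w2 β ρ C
  refine ⟨fun l => (hd l).differentiableAt, fun lam => ?_⟩
  rw [show deriv (dualFun ρ r c w1 w2 β C) = dualDeriv r c w1 w2 β ρ C from
    funext fun l => (hd l).deriv]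
  convert hasDerivAt_dualDeriv r c w1 w2 β ρ C lam using 1
  -- true also at `β = 0`, where `0⁻¹ = 0`
  have hβ : β * β⁻¹ * β⁻¹ = β⁻¹ := by simpa using inv_mul_mul_self β⁻¹
  simp only [varBool_const_mul, Finset.mul_sum]
  rw [add_comm]
  congr 1
  refine Finset.sum_congr rfl fun z _ => ?_
  linear_combination (-(ρ z * w2 z ^ 2 * varBool (gibbs r c w1 w2 β lam z) (c z))) * hβ

/-- the dual function `d` is twice differentiable on `ℝ`, and
`d″(λ) = β + (1/β) ∑_z ρ(z) w2(z)² Var_{π_λ(·|z)}(c(z,·))`. -/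
theorem dual_second_deriv {Z : Type*} [Fintype Z] [Nonempty Z]
    (ρ : Z → ℝ) (hρ_pos : ∀ z, 0 < ρ z) (hρ_sum : ∑ z, ρ z = 1)
    (r c : Z → Bool → ℝ) (w1 w2 : Z → ℝ)
    (hw1 : ∀ z, 0 ≤ w1 z) (hw2 : ∀ z, 0 ≤ w2 z)
    (β : ℝ) (hβ : 0 < β) (C : ℝ) :
    Differentiable ℝ (fun l => dualFun ρ r c w1 w2 β C l) ∧
    ∀ lam : ℝ,
      HasDerivAt (deriv (fun l => dualFun ρ r c w1 w2 β C l))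
        (β + 1 / β * ∑ z, ρ z * w2 z ^ 2 *
          varBool (gibbs r c w1 w2 β lam z) (c z))
        lam :=
  dual_second_deriv_general ρ r c w1 w2 β C
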